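/- (Context lemma for normal-form proofs.) For all closed λ-terms M, N and every t ∈ ℕ, if NFₜ(M,N), then for every λ-term X whose only free variable is z, NFₜ([M/z]X, [N/z]X) — that is, there is a normal-form proof of [M/z]X =ω [N/z]X with the same chain length t. -/

import Mathlib

/-- Untyped λ-terms in de Bruijn representation. -/
inductive Lam : Type
  | var : ℕ → Lam
  | app : Lam → Lam → Lam
  | lam : Lam → Lam
deriving DecidableEq

namespace Lam

/-- Lift (shift) the free variables ≥ d by one. -/
def lift : ℕ → Lam → Lam
  | d, var n => if n < d then var n else var (n + 1)
  | d, app M N => app (lift d M) (lift d N)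
  | d, lam M => lam (lift (d + 1) M)

/-- Capture-avoiding substitution of N for the free variable k. -/
def subst : ℕ → Lam → Lam → Lam
  | k, N, var n => if n = k then N else if k < n then var (n - 1) else var n
  | k, N, app A B => app (subst k N A) (subst k N B)
  | k, N, lam M => lam (subst (k + 1) (lift 0 N) M)

/-- All free variables are < k. -/
def ClosedUnder : ℕ → Lam → Prop
  | k, var n => n < k
  | k, app A B => ClosedUnder k A ∧ ClosedUnder k B
  | k, lam M => ClosedUnder (k + 1) M

/-- A term is closed if it has no free variables. -/
def Closed (M : Lam) : Prop := ClosedUnder 0 M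

/-- x occurs free in the term. -/
def FreeIn : ℕ → Lam → Prop
  | x, var n => n = x
  | x, app A B => FreeIn x A ∨ FreeIn x B
  | x, lam M => FreeIn (x + 1) M

/-- The minimal number of abstractions needed to close the term. -/
def fvBound : Lam → ℕ
  | var n => n + 1
  | app A B => max (fvBound A) (fvBound B)
  | lam M => fvBound M - 1

/-- Iterated abstraction λz₁…zₙ.M. -/
def absN : ℕ → Lam → Lam
  | 0, M => M
  | n + 1, M => lam (absN n M)

/-- The λ-closure of a term: abstraction over all its free variables. -/
def close (M : Lam) : Lam := absN (fvBound M) M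

/-- One-step β-reduction (closed under arbitrary contexts). -/
inductive Beta : Lam → Lam → Prop
  | beta (U V) : Beta (app (lam U) V) (subst 0 V U)
  | appL {M M'} (N) : Beta M M' → Beta (app M N) (app M' N)
  | appR (M) {N N'} : Beta N N' → Beta (app M N) (app M N')
  | lam {M M'} : Beta M M' → Beta (lam M) (lam M')

/-- Many-step β-reduction. -/
def BetaStar : Lam → Lam → Prop := Relation.ReflTransGen Beta

/-- β-conversion. -/
def BetaConv : Lam → Lam → Prop := Relation.EqvGen Beta

def iComb : Lam := lam (var 0)
def omegaComb : Lam := lam (app (var 0) (var 0))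
def Omega : Lam := app omegaComb omegaComb
def Kstar : Lam := lam (lam (var 0))

/-- Apply a term to a list of arguments: M N₁ ⋯ Nₖ. -/
def appList : Lam → List Lam → Lam
  | M, [] => M
  | M, N :: Ns => appList (app M N) Ns

/-- A term is solvable iff its λ-closure applied to some closed terms β-converts to I. -/
def Solvable (M : Lam) : Prop :=
  ∃ Ns : List Lam, (∀ N ∈ Ns, Closed N) ∧ BetaConv (appList (close M) Ns) iComb

/-- One-step weak βΩ-reduction. -/
inductive WBO : Lam → Lam → Prop
  | wbeta (U V) : Closed (app (lam U) V) → WBO (app (lam U) V) (subst 0 V U)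
  | womega (M) : Closed M → ¬ Solvable M → M ≠ Omega → WBO M Omega
  | appL {M M'} (N) : WBO M M' → WBO (app M N) (app M' N)
  | appR (M) {N N'} : WBO N N' → WBO (app M N) (app M N')
  | lam {M M'} : WBO M M' → WBO (lam M) (lam M')

/-- Many-step weak βΩ-reduction. -/
def WBOStar : Lam → Lam → Prop := Relation.ReflTransGen WBO

/-- Weak βΩ-conversion. -/
def WBOConv : Lam → Lam → Prop := Relation.EqvGen WBO

/-- One-step full βΩ-reduction (Ω-contraction allowed on open terms,
unsolvability referring to the λ-closure). -/
inductive BO : Lam → Lam → Prop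
  | beta (U V) : BO (app (lam U) V) (subst 0 V U)
  | omega (M) : ¬ Solvable M → M ≠ Omega → BO M Omega
  | appL {M M'} (N) : BO M M' → BO (app M N) (app M' N)
  | appR (M) {N N'} : BO N N' → BO (app M N) (app M N')
  | lam {M M'} : BO M M' → BO (lam M) (lam M')

/-- Many-step full βΩ-reduction. -/
def BOStar : Lam → Lam → Prop := Relation.ReflTransGen BO

/-- Full βΩ-conversion. -/
def BOConv : Lam → Lam → Prop := Relation.EqvGen BO

/-- A term is in βΩ-normal form iff it admits no βΩ-reduction, i.e. it contains
no β-redex and no unsolvable subterm other than Ω. -/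
def BONormal (M : Lam) : Prop := ∀ N, ¬ BO M N

/-- Head weak β-reduction: contraction of the head redex
λx₁…xₙ.(λx.U)V M₁⋯Mₖ → λx₁…xₙ.([V/x]U)M₁⋯Mₖ with (λx.U)V closed. -/
inductive HeadWBeta : Lam → Lam → Prop
  | head (U V) : Closed (app (lam U) V) → HeadWBeta (app (lam U) V) (subst 0 V U)
  | app {M M'} (N) : (∀ U, M ≠ lam U) → HeadWBeta M M' → HeadWBeta (app M N) (app M' N)
  | lam {M M'} : HeadWBeta M M' → HeadWBeta (lam M) (lam M')

/-- The head variable of the term is the free variable x,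
i.e. the term has the form λy₁…yᵣ. x X₁ ⋯ Xₘ. -/
inductive HeadVar : ℕ → Lam → Prop
  | var (x) : HeadVar x (var x)
  | app {x M} (N) : (∀ U, M ≠ lam U) → HeadVar x M → HeadVar x (app M N)
  | lam {x M} : HeadVar (x + 1) M → HeadVar x (lam M)

/-- Subterm relation. -/
inductive Subterm : Lam → Lam → Prop
  | refl (M) : Subterm M M
  | appL {S M} (N) : Subterm S M → Subterm S (app M N)
  | appR (M) {S N} : Subterm S N → Subterm S (app M N)
  | lam {S M} : Subterm S M → Subterm S (lam M)

/-- A closed term is in weak βΩ head normal form iff it is unsolvable and equal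
to Ω, or solvable and without a head weak β-redex. -/
def WHnf (M : Lam) : Prop :=
  (¬ Solvable M ∧ M = Omega) ∨ (Solvable M ∧ ∀ N, ¬ HeadWBeta M N)

/-- Equality in the theory Hω. -/
inductive HOmega : Lam → Lam → Prop
  | refl (M) : Closed M → HOmega M M
  | wbetaL (U N) : Closed (app (lam U) N) → HOmega (app (lam U) N) (subst 0 N U)
  | wbetaR (U N) : Closed (app (lam U) N) → HOmega (subst 0 N U) (app (lam U) N)
  | unsolvL (M) : Closed M → ¬ Solvable M → HOmega M Omega
  | unsolvR (M) : Closed M → ¬ Solvable M → HOmega Omega M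
  | leibnitz (X Y M N) : ClosedUnder 1 X → ClosedUnder 1 Y → Closed M → Closed N →
      HOmega (subst 0 M X) (subst 0 M Y) → HOmega M N →
      HOmega (subst 0 N X) (subst 0 N Y)
  | omega_rule (P Q) : Closed P → Closed Q →
      (∀ M, Closed M → HOmega (app P M) (app Q M)) → HOmega P Q

/-- The n-fold application fⁿ z in the Church numeral. -/
def churchBody : ℕ → Lam
  | 0 => var 0
  | n + 1 => app (var 1) (churchBody n)

/-- The n-th Church numeral. -/
def church (n : ℕ) : Lam := lam (lam (churchBody n))


/-- NFₜ(M,N): M =ω N is provable by a proof whose endpiece is in normal form with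
a chain of length t.  (The witnessing function `f` skolemizes the existential
"for every closed L there is some t' with NF_{t'}(P L, Q L)" in the clause OM(P,Q).) -/
inductive NF : ℕ → Lam → Lam → Prop
  | base (M N) : Closed M → Closed N → WBOConv M N → NF 0 M N
  | step (t M N M₁ P₁ Q₁) : Closed M → Closed N → Closed M₁ → Closed P₁ → Closed Q₁ →
      WBOConv M (app M₁ P₁) →
      (f : Lam → ℕ) →
      (∀ L, Closed L → NF (f L) (app P₁ L) (app Q₁ L)) →
      NF t (app M₁ Q₁) N → NF (t + 1) M N

theorem closedUnder_mono : ∀ {M : Lam} {k k'}, ClosedUnder k M → k ≤ k' → ClosedUnder k' M := by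
  intro M
  induction M with
  | var n => intro k k' h hk; exact lt_of_lt_of_le h hk
  | app A B ihA ihB => intro k k' h hk; exact ⟨ihA h.1 hk, ihB h.2 hk⟩
  | lam M ih => intro k k' h hk; exact ih h (by omega)

theorem lift_of_closed : ∀ {M : Lam} {k d}, ClosedUnder k M → k ≤ d → lift d M = M := by
  intro M
  induction M with
  | var n =>
      intro k d h hk
      have : n < d := lt_of_lt_of_le h hk
      simp [lift, this]
  | app A B ihA ihB => intro k d h hk; simp [lift, ihA h.1 hk, ihB h.2 hk]
  | lam M ih =>
      intro k d h hk
      simp [lift, ih (show ClosedUnder (k + 1) M from h) (Nat.succ_le_succ hk)]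

theorem lift_closedUnder : ∀ {M : Lam} {c d}, ClosedUnder c M → ClosedUnder (c + 1) (lift d M) := by
  intro M
  induction M with
  | var n =>
      intro c d h
      have h' : n < c := h
      by_cases hd : n < d
      · simp only [lift, if_pos hd]; exact (by omega : n < c + 1)
      · simp only [lift, if_neg hd]; exact (by omega : n + 1 < c + 1)
  | app A B ihA ihB => intro c d h; exact ⟨ihA h.1, ihB h.2⟩
  | lam M ih => intro c d h; exact ih h

theorem subst_of_closed : ∀ {M : Lam} (N : Lam) {k j}, ClosedUnder k M → k ≤ j →
    subst j N M = M := by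
  intro M
  induction M with
  | var n =>
      intro N k j h hk
      have h' : n < k := h
      have h1 : n ≠ j := by omega
      have h2 : ¬ j < n := by omega
      simp [subst, h1, h2]
  | app A B ihA ihB => intro N k j h hk; simp [subst, ihA N h.1 hk, ihB N h.2 hk]
  | lam M ih =>
      intro N k j h hk
      simp [subst, ih (lift 0 N) (show ClosedUnder (k + 1) M from h) (Nat.succ_le_succ hk)]

theorem subst_closedUnder : ∀ {X : Lam} {N k j}, ClosedUnder (k + 1) X → ClosedUnder j N →
    k ≤ j → ClosedUnder j (subst k N X) := by
  intro X
  induction X with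
  | var n =>
      intro N k j h hN hkj
      by_cases hnk : n = k
      · simpa [subst, hnk] using hN
      · have h2 : ¬ k < n := by
          change n < k + 1 at h; omega
        have : ClosedUnder j (var n) := by
          change n < j; change n < k + 1 at h; omega
        simpa [subst, hnk, h2] using this
  | app A B ihA ihB => intro N k j h hN hkj; exact ⟨ihA h.1 hN hkj, ihB h.2 hN hkj⟩
  | lam M ih =>
      intro N k j h hN hkj
      exact ih h (lift_closedUnder hN) (by omega)

theorem lift_subst {P : Lam} (hP : Closed P) : ∀ (N : Lam) (k d : ℕ), d ≤ k →
    lift d (subst k P N) = subst (k + 1) P (lift d N) := by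
  intro N
  induction N with
  | var n =>
      intro k d hdk
      rcases lt_trichotomy n k with h | h | h
      · have h1 : n ≠ k := by omega
        have h2 : ¬ k < n := by omega
        by_cases hd : n < d
        · have : n ≠ k + 1 := by omega
          have h4 : ¬ k + 1 < n := by omega
          simp [subst, lift, h1, h2, hd, this, h4]
        · have h3 : n + 1 ≠ k + 1 := by omega
          have h4 : ¬ k + 1 < n + 1 := by omega
          simp [subst, lift, h1, h2, hd, h3, h4]
      · subst h
        have hd : ¬ n < d := by omega
        simp [subst, lift, hd, lift_of_closed hP (Nat.zero_le d)]
      · have h1 : n ≠ k := by omega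
        have hd1 : ¬ n - 1 < d := by omega
        have hd2 : ¬ n < d := by omega
        have h3 : n + 1 ≠ k + 1 := by omega
        have h4 : k + 1 < n + 1 := by omega
        simp [subst, lift, h1, h, hd1, hd2, h3, h4]
        omega
  | app A B ihA ihB => intro k d hdk; simp [subst, lift, ihA k d hdk, ihB k d hdk]
  | lam M ih =>
      intro k d hdk
      simp [subst, lift, lift_of_closed hP (Nat.zero_le 0), ih (k + 1) (d + 1) (by omega)]

theorem subst_subst {P : Lam} (hP : Closed P) : ∀ (X : Lam) (N : Lam) (k : ℕ),
    ClosedUnder (k + 1) X → ClosedUnder (k + 1) N →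
    subst k P (subst k N X) = subst k (subst k P N) X := by
  intro X
  induction X with
  | var n =>
      intro N k hX hN
      by_cases hnk : n = k
      · simp [subst, hnk]
      · have h2 : ¬ k < n := by
          change n < k + 1 at hX; omega
        simp [subst, hnk, h2]
  | app A B ihA ihB =>
      intro N k hX hN
      simp [subst, ihA N k hX.1 hN, ihB N k hX.2 hN]
  | lam M ih =>
      intro N k hX hN
      have hl : lift 0 P = P := lift_of_closed hP (Nat.zero_le 0)
      simp only [subst, hl]
      rw [ih (lift 0 N) (k + 1) hX (lift_closedUnder hN),
        lift_subst hP N k 0 (Nat.zero_le k)]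

theorem omega_closedUnder : ∀ k, ClosedUnder k Omega := by
  intro k
  exact ⟨⟨Nat.succ_pos k, Nat.succ_pos k⟩, ⟨Nat.succ_pos k, Nat.succ_pos k⟩⟩

theorem wbo_closedUnder {A B : Lam} (h : WBO A B) : ∀ k, ClosedUnder k A ↔ ClosedUnder k B := by
  induction h with
  | wbeta U V hc =>
      intro k
      have hB : Closed (subst 0 V U) := subst_closedUnder hc.1 hc.2 (le_refl 0)
      exact ⟨fun _ => closedUnder_mono hB (Nat.zero_le k),
        fun _ => closedUnder_mono hc (Nat.zero_le k)⟩
  | womega M hc _ _ =>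
      intro k
      exact ⟨fun _ => omega_closedUnder k, fun _ => closedUnder_mono hc (Nat.zero_le k)⟩
  | appL N _ ih => intro k; exact and_congr_left' (ih k)
  | appR M _ ih => intro k; exact and_congr_right' (ih k)
  | lam _ ih => intro k; exact ih (k + 1)

theorem wboconv_closed {A B : Lam} (h : WBOConv A B) : Closed A ↔ Closed B := by
  induction h with
  | rel a b hab => exact wbo_closedUnder hab 0
  | refl a => exact Iff.rfl
  | symm a b _ ih => exact ih.symm
  | trans a b c _ _ ih1 ih2 => exact ih1.trans ih2

theorem wbostar_appL {M M' : Lam} (N : Lam) (h : WBOStar M M') :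
    WBOStar (app M N) (app M' N) := by
  induction h with
  | refl => exact Relation.ReflTransGen.refl
  | tail _ hb ih => exact ih.tail (WBO.appL N hb)

theorem wbostar_appR (M : Lam) {N N' : Lam} (h : WBOStar N N') :
    WBOStar (app M N) (app M N') := by
  induction h with
  | refl => exact Relation.ReflTransGen.refl
  | tail _ hb ih => exact ih.tail (WBO.appR M hb)

theorem wbostar_lam {M M' : Lam} (h : WBOStar M M') : WBOStar (lam M) (lam M') := by
  induction h with
  | refl => exact Relation.ReflTransGen.refl
  | tail _ hb ih => exact ih.tail (WBO.lam hb)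

theorem wbostar_conv {A B : Lam} (h : WBOStar A B) : WBOConv A B := by
  induction h with
  | refl => exact Relation.EqvGen.refl A
  | tail _ hb ih => exact ih.trans _ _ _ (Relation.EqvGen.rel _ _ hb)

theorem subst_wbo {A B : Lam} (hA : Closed A) (hB : Closed B) (h : WBO A B) :
    ∀ (X : Lam) (k : ℕ), WBOStar (subst k A X) (subst k B X) := by
  intro X
  induction X with
  | var n =>
      intro k
      by_cases hnk : n = k
      · have h1 : WBOStar A B := Relation.ReflTransGen.single h
        simpa [subst, hnk] using h1
      · simp only [subst, if_neg hnk]; exact Relation.ReflTransGen.refl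
  | app C D ihC ihD =>
      intro k
      exact (wbostar_appL _ (ihC k)).trans (wbostar_appR _ (ihD k))
  | lam M ih =>
      intro k
      rw [show (subst k A (lam M)) = lam (subst (k + 1) A M) by
            simp [subst, lift_of_closed hA (Nat.zero_le 0)],
          show (subst k B (lam M)) = lam (subst (k + 1) B M) by
            simp [subst, lift_of_closed hB (Nat.zero_le 0)]]
      exact wbostar_lam (ih (k + 1))

theorem subst_wboconv {A B : Lam} (h : WBOConv A B) (hA : Closed A) (X : Lam) (k : ℕ) :
    WBOConv (subst k A X) (subst k B X) := by
  induction h with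
  | rel a b hab =>
      exact wbostar_conv (subst_wbo hA ((wbo_closedUnder hab 0).1 hA) hab X k)
  | refl a => exact Relation.EqvGen.refl _
  | symm a b hab ih =>
      exact Relation.EqvGen.symm _ _ (ih ((wboconv_closed hab).2 hA))
  | trans a b c hab hbc ih1 ih2 =>
      exact (ih1 hA).trans _ _ _ (ih2 ((wboconv_closed hab).1 hA))

theorem nf_conv_left {M M' N : Lam} (t : ℕ) (hM' : Closed M') (hc : WBOConv M' M)
    (h : NF t M N) : NF t M' N := by
  cases h with
  | base M N hMc hNc hconv =>
      exact NF.base M' N hM' hNc (hc.trans _ _ _ hconv)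
  | step t M N M₁ P₁ Q₁ hMc hNc h1 h2 h3 hconv f hf hrest =>
      exact NF.step t M' N M₁ P₁ Q₁ hM' hNc h1 h2 h3 (hc.trans _ _ _ hconv) f hf hrest

/-- Context lemma: a normal-form proof of M =ω N of chain length t yields a
normal-form proof of [M/z]X =ω [N/z]X of the same chain length, for any X whose
only free variable is z. -/
theorem nf_context (M N : Lam) (hM : Closed M) (hN : Closed N) (t : ℕ) (h : NF t M N)
    (X : Lam) (hXc : ClosedUnder 1 X) (hXf : FreeIn 0 X) :
    NF t (subst 0 M X) (subst 0 N X) := by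
  clear hM hN
  induction h generalizing X with
  | base M N hMc hNc hconv =>
      exact NF.base _ _ (subst_closedUnder hXc hMc (le_refl 0))
        (subst_closedUnder hXc hNc (le_refl 0)) (subst_wboconv hconv hMc X 0)
  | step t M N M₁ P₁ Q₁ hMc hNc hM₁ hP₁ hQ₁ hconv f hf hrest ihf ih =>
      -- Y = [M₁ z / z] X
      set Y : Lam := subst 0 (app M₁ (var 0)) X with hY
      have hNY : ClosedUnder 1 (app M₁ (var 0)) :=
        ⟨closedUnder_mono hM₁ (Nat.zero_le 1), Nat.zero_lt_one⟩
      have hYc : ClosedUnder 1 Y := subst_closedUnder hXc hNY (Nat.zero_le 1)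
      -- key identity: [P/z]Y = [M₁ P / z] X for closed P
      have key : ∀ (P : Lam), Closed P → subst 0 P Y = subst 0 (app M₁ P) X := by
        intro P hP
        rw [hY, subst_subst hP X (app M₁ (var 0)) 0 hXc hNY]
        have : subst 0 P (app M₁ (var 0)) = app M₁ P := by
          simp [subst, subst_of_closed P hM₁ (le_refl 0)]
        rw [this]
      have hlamY : Closed (lam Y) := hYc
      -- (λ.Y) P₁ →wβ [P₁/z]Y
      have redP : WBO (app (lam Y) P₁) (subst 0 P₁ Y) := WBO.wbeta Y P₁ ⟨hYc, hP₁⟩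
      have redQ : WBO (app (lam Y) Q₁) (subst 0 Q₁ Y) := WBO.wbeta Y Q₁ ⟨hYc, hQ₁⟩
      have c1 : WBOConv (subst 0 M X) (subst 0 (app M₁ P₁) X) := subst_wboconv hconv hMc X 0
      have c2 : WBOConv (subst 0 M X) (app (lam Y) P₁) := by
        refine c1.trans _ _ _ ?_
        rw [← key P₁ hP₁]
        exact Relation.EqvGen.symm _ _ (Relation.EqvGen.rel _ _ redP)
      have tail : NF t (app (lam Y) Q₁) (subst 0 N X) := by
        have ihX : NF t (subst 0 (app M₁ Q₁) X) (subst 0 N X) := ih X hXc hXf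
        refine nf_conv_left t ⟨hYc, hQ₁⟩ ?_ ihX
        rw [← key Q₁ hQ₁]
        exact Relation.EqvGen.rel _ _ redQ
      exact NF.step t (subst 0 M X) (subst 0 N X) (lam Y) P₁ Q₁
        (subst_closedUnder hXc hMc (le_refl 0)) (subst_closedUnder hXc hNc (le_refl 0))
        hlamY hP₁ hQ₁ c2 f hf tail

end Lam
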